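/- If a 3-uniform hypergraph H contains no pseudo-cycle minus one hyperedge of size ℓ for every 4 ≤ ℓ ≤ L with 3 ∤ ℓ (where L ≥ 4), then for every vertex set S ⊆ V(H) and vertex v ∈ V(H) \ S, the symmetrized hypergraph H_{S,v} also contains no such pseudo-cycle minus one hyperedge. -/

import Mathlib

def HasPseudoCycleMinus {W : Type*} [DecidableEq W] (H : Set (Finset W)) (ℓ : ℕ) : Prop :=
  ∃ v : ℕ → W, ∀ i, i + 2 ≤ ℓ →
    ({v i, v ((i + 1) % ℓ), v ((i + 2) % ℓ)} : Finset W) ∈ H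

/-- The symmetrization `H_{S,v}`: the vertex set is `(V ∖ S) ∪ T_{S,v}` where
`T_{S,v}` is a set of new vertices indexed by `S` (modelled by the summand `↥S` of
`V ⊕ ↥S`); its hyperedges are the hyperedges of `H` disjoint from `S`, together with
all `{vᵢ, x, y}` for `vᵢ ∈ T_{S,v}` and `{v, x, y} ∈ H` with `{x, y} ∩ S = ∅`. -/
def SymmHyp {V : Type*} [DecidableEq V] (H : Set (Finset V)) (S : Set V) (v : V) :
    Set (Finset (V ⊕ ↥S)) :=
  {e' | (∃ e ∈ H, (∀ x ∈ e, x ∉ S) ∧ e' = e.image Sum.inl) ∨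
        (∃ (s : ↥S) (x y : V), ({v, x, y} : Finset V) ∈ H ∧ x ∉ S ∧ y ∉ S ∧
          e' = {Sum.inr s, Sum.inl x, Sum.inl y})}

/-! Collapsing every new vertex `vᵢ` back onto `v` is a homomorphism `H_{S,v} → H`, and
pseudo-cycles minus one hyperedge are carried along homomorphisms; so a pseudo-cycle in
`H_{S,v}` would give one of the same size in `H`. -/

theorem HasPseudoCycleMinus.map {W W' : Type*} [DecidableEq W] [DecidableEq W']
    {H : Set (Finset W)} {H' : Set (Finset W')} (f : W → W')
    (hf : ∀ e ∈ H, e.image f ∈ H') {ℓ : ℕ} (hH : HasPseudoCycleMinus H ℓ) :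
    HasPseudoCycleMinus H' ℓ := by
  obtain ⟨w, hw⟩ := hH
  refine ⟨f ∘ w, fun i hi => ?_⟩
  simpa [Finset.image_insert] using hf _ (hw i hi)

theorem SymmHyp.image_elim_mem {V : Type*} [DecidableEq V] {H : Set (Finset V)} {S : Set V}
    {v : V} {e : Finset (V ⊕ ↥S)} (he : e ∈ SymmHyp H S v) :
    e.image (Sum.elim id fun _ => v) ∈ H := by
  rcases he with ⟨e₀, he₀, -, rfl⟩ | ⟨s, x, y, hvxy, -, -, rfl⟩
  · simpa [Finset.image_image] using he₀
  · simpa using hvxy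

theorem stmt17_general {V : Type*} [DecidableEq V] (H : Set (Finset V))
    (L : ℕ) (S : Set V) (v : V)
    (h : ∀ ℓ, 4 ≤ ℓ → ℓ ≤ L → ¬ 3 ∣ ℓ → ¬ HasPseudoCycleMinus H ℓ) :
    ∀ ℓ, 4 ≤ ℓ → ℓ ≤ L → ¬ 3 ∣ ℓ → ¬ HasPseudoCycleMinus (SymmHyp H S v) ℓ :=
  fun ℓ h4 hℓL h3 hcyc =>
    h ℓ h4 hℓL h3 (hcyc.map _ fun _ => SymmHyp.image_elim_mem)

/-- Lemma 5.3: if `H` contains no pseudo-cycle minus one hyperedge of size `ℓ` for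
every `4 ≤ ℓ ≤ L` with `3 ∤ ℓ`, then neither does the symmetrization `H_{S,v}`. -/
theorem stmt17 {V : Type*} [DecidableEq V] (H : Set (Finset V))
    (hH : ∀ e ∈ H, e.card = 3) (L : ℕ) (hL : 4 ≤ L) (S : Set V) (v : V) (hv : v ∉ S)
    (h : ∀ ℓ, 4 ≤ ℓ → ℓ ≤ L → ¬ 3 ∣ ℓ → ¬ HasPseudoCycleMinus H ℓ) :
    ∀ ℓ, 4 ≤ ℓ → ℓ ≤ L → ¬ 3 ∣ ℓ → ¬ HasPseudoCycleMinus (SymmHyp H S v) ℓ :=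
  stmt17_general H L S v h
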